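/- Let X = Σ_X^{1/2} Z and Y = Σ_Y^{1/2} Z be centered normal random vectors in R^n with covariance matrices Σ_X, Σ_Y, let a, b ∈ R^n, and let f(z) = |Σ_Y^{1/2} z − b|², g(z) = |Σ_X^{1/2} z − a|². Then E[|f(Z) − g(Z)|²] = 2‖Σ_X − Σ_Y‖_HS² + (tr Σ_X − tr Σ_Y + |a|² − |b|²)² + 4|Σ_X^{1/2} a − Σ_Y^{1/2} b|². -/

import Mathlib

open MeasureTheory ProbabilityTheory

namespace Matrix.PosSemidef

open scoped ComplexOrder

/-- The positive semidefinite square root of a positive semidefinite matrix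
(as defined in Mathlib of December 2024; removed since). -/
noncomputable def sqrt {n 𝕜 : Type*} [Fintype n] [DecidableEq n] [RCLike 𝕜]
    {A : Matrix n n 𝕜} (hA : A.PosSemidef) : Matrix n n 𝕜 :=
  hA.1.eigenvectorUnitary.1 * Matrix.diagonal ((↑) ∘ (√·) ∘ hA.1.eigenvalues) *
  (star hA.1.eigenvectorUnitary : Matrix n n 𝕜)

end Matrix.PosSemidef

/-!
Write `S = Σ_Y^{1/2}`, `T = Σ_X^{1/2}`. Since `S` and `T` are symmetric square roots, `f - g` is
the quadratic polynomial `zᵀ (Σ_Y - Σ_X) z + 2 ⟨T a - S b, z⟩ + |b|² - |a|²` in `z`. The second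
moment of `W = zᵀ A z + ⟨c, z⟩ + d` (with `A` symmetric) under the standard Gaussian follows from
Gaussian integration by parts `E[z_i P] = E[∂_i P]` for polynomials `P`, which comes from the
one-dimensional Stein identity coordinatewise. Applied twice it gives
`E[z_i z_j P] = δ_ij E[P] + E[∂_j ∂_i P]`, and expanding `E[W²] = Σ A_ij E[z_i z_j W] +
Σ c_i E[z_i W] + d E[W]` yields `2 ‖A‖²_HS + (tr A + d)² + |c|²`.
-/

open Real
open scoped Matrix

namespace Matrix.PosSemidef

open scoped ComplexOrder

variable {n 𝕜 : Type*} [Fintype n] [DecidableEq n] [RCLike 𝕜] {A : Matrix n n 𝕜}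

lemma sqrt_eq_cfc (hA : A.PosSemidef) : hA.sqrt = cfc Real.sqrt A := by
  rw [hA.1.cfc_eq]; rfl

lemma isHermitian_sqrt (hA : A.PosSemidef) : hA.sqrt.IsHermitian := by
  rw [sqrt_eq_cfc]; exact cfc_predicate _ _

lemma sqrt_mul_sqrt (hA : A.PosSemidef) : hA.sqrt * hA.sqrt = A := by
  rw [sqrt_eq_cfc, ← cfc_mul Real.sqrt Real.sqrt A]
  conv_rhs => rw [← cfc_id' ℝ A hA.1.isSelfAdjoint]
  refine cfc_congr fun x hx => ?_
  obtain ⟨i, rfl⟩ := hA.1.spectrum_real_eq_range_eigenvalues ▸ hx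
  exact Real.mul_self_sqrt (hA.eigenvalues_nonneg i)

end Matrix.PosSemidef

lemma sum_sq_mulVec_sub {κ ι : Type*} [Fintype κ] [Fintype ι] (M : Matrix κ ι ℝ)
    (v : κ → ℝ) (z : ι → ℝ) :
    ∑ k, ((M *ᵥ z) k - v k) ^ 2 = z ⬝ᵥ (Mᵀ * M) *ᵥ z - 2 * (Mᵀ *ᵥ v) ⬝ᵥ z + ∑ k, v k ^ 2 := by
  have hsq : ∀ w : κ → ℝ, ∑ k, w k ^ 2 = w ⬝ᵥ w := fun w => by simp [dotProduct, sq]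
  rw [hsq v, show ∑ k, ((M *ᵥ z) k - v k) ^ 2 = _ from hsq (M *ᵥ z - v), sub_dotProduct,
    dotProduct_sub, dotProduct_sub, dotProduct_comm (M *ᵥ z) v, Matrix.dotProduct_mulVec,
    Matrix.dotProduct_mulVec, ← Matrix.mulVec_transpose, ← Matrix.mulVec_transpose,
    Matrix.mulVec_mulVec, dotProduct_comm _ z]
  ring

lemma Matrix.PosSemidef.sum_sq_sqrt_mulVec_sub {ι : Type*} [Fintype ι] [DecidableEq ι]
    {S : Matrix ι ι ℝ} (hS : S.PosSemidef) (v z : ι → ℝ) :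
    ∑ i, ((hS.sqrt *ᵥ z) i - v i) ^ 2 = z ⬝ᵥ S *ᵥ z - 2 * (hS.sqrt *ᵥ v) ⬝ᵥ z + ∑ i, v i ^ 2 := by
  have hsymm : hS.sqrtᵀ = hS.sqrt := (Matrix.isHermitian_iff_isSymm.1 hS.isHermitian_sqrt).eq
  rw [sum_sq_mulVec_sub, hsymm, hS.sqrt_mul_sqrt]

lemma hasDerivAt_gaussianPDFReal_zero_one (x : ℝ) :
    HasDerivAt (gaussianPDFReal 0 1) (-x * gaussianPDFReal 0 1 x) x := by
  have h : HasDerivAt (fun y : ℝ => -y ^ 2 / 2) (-x) x :=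
    ((hasDerivAt_pow 2 x).neg.div_const 2).congr_deriv (by ring)
  have hφ : gaussianPDFReal 0 1 = fun y => (√(2 * π))⁻¹ * rexp (-y ^ 2 / 2) := by
    ext y; simp [gaussianPDFReal_def]
  rw [hφ]
  exact (h.exp.const_mul _).congr_deriv (by ring)

lemma integrable_gaussianReal_zero_one_iff {f : ℝ → ℝ} :
    Integrable f (gaussianReal 0 1) ↔ Integrable (fun x => gaussianPDFReal 0 1 x * f x) := by
  rw [gaussianReal_of_var_ne_zero _ one_ne_zero, integrable_withDensity_iff_integrable_smul'
    (measurable_gaussianPDF _ _) (ae_of_all _ fun _ => ENNReal.ofReal_lt_top)]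
  simp [toReal_gaussianPDF]

lemma integral_mul_eq_integral_deriv_gaussianReal {f f' : ℝ → ℝ}
    (hf : ∀ x, HasDerivAt f (f' x) x) (hfi : Integrable f (gaussianReal 0 1))
    (hf'i : Integrable f' (gaussianReal 0 1))
    (hxfi : Integrable (fun x => x * f x) (gaussianReal 0 1)) :
    ∫ x, x * f x ∂gaussianReal 0 1 = ∫ x, f' x ∂gaussianReal 0 1 := by
  rw [integrable_gaussianReal_zero_one_iff] at hfi hf'i hxfi
  simp only [integral_gaussianReal_eq_integral_smul one_ne_zero, smul_eq_mul]
  have hφ : ∀ x, HasDerivAt (fun y => -gaussianPDFReal 0 1 y) (x * gaussianPDFReal 0 1 x) x :=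
    fun x => (hasDerivAt_gaussianPDFReal_zero_one x).neg.congr_deriv (by ring)
  have key := integral_mul_deriv_eq_deriv_mul_of_integrable (fun x _ => hf x) (fun x _ => hφ x)
    (by convert hxfi using 1; ext x; simp only [Pi.mul_apply]; ring)
    (by convert hf'i.neg using 1; ext x; simp only [Pi.mul_apply, Pi.neg_apply]; ring)
    (by convert hfi.neg using 1; ext x; simp only [Pi.mul_apply, Pi.neg_apply]; ring)
  convert key using 1
  · congr 1; ext x; ring
  · rw [← integral_neg]; congr 1; ext x; ring

lemma integrable_pow_gaussianReal (μ : ℝ) (v : NNReal) (k : ℕ) :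
    Integrable (fun x => x ^ k) (gaussianReal μ v) :=
  ((memLp_id_gaussianReal k).integrable_norm_pow').mono' (by fun_prop)
    (ae_of_all _ fun x => by simp [norm_pow])

lemma integral_pow_succ_gaussianReal (k : ℕ) :
    ∫ x, x ^ (k + 1) ∂gaussianReal 0 1 = k * ∫ x, x ^ (k - 1) ∂gaussianReal 0 1 := by
  cases k with
  | zero => simp [integral_id_gaussianReal]
  | succ k =>
    have h := integral_mul_eq_integral_deriv_gaussianReal (fun x => hasDerivAt_pow (k + 1) x)
      (integrable_pow_gaussianReal 0 1 _) ((integrable_pow_gaussianReal 0 1 k).const_mul _)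
      (by simpa [pow_succ'] using integrable_pow_gaussianReal 0 1 (k + 2))
    simpa [← pow_succ', integral_const_mul] using h

section GaussianPolynomial

open MvPolynomial

variable {ι : Type*} [Fintype ι]

lemma eval_monomial_eq_prod (z : ι → ℝ) (s : ι →₀ ℕ) (a : ℝ) :
    eval z (monomial s a) = a * ∏ i, z i ^ s i := by
  rw [eval_monomial, Finsupp.prod_fintype _ _ (fun _ => pow_zero _)]

lemma integrable_eval_gaussianPi (P : MvPolynomial ι ℝ) :
    Integrable (fun z => eval z P) (Measure.pi fun _ : ι => gaussianReal 0 1) := by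
  induction P using MvPolynomial.induction_on' with
  | monomial s a =>
    simp_rw [eval_monomial_eq_prod]
    exact (Integrable.fintype_prod fun i => integrable_pow_gaussianReal 0 1 (s i)).const_mul a
  | add P Q hP hQ => simp only [map_add]; exact hP.add hQ

/-- Packaged as a linear map, so that linearity no longer carries integrability side goals. -/
noncomputable def gaussianExpectation (ι : Type*) [Fintype ι] : MvPolynomial ι ℝ →ₗ[ℝ] ℝ where
  toFun P := ∫ z, eval z P ∂(Measure.pi fun _ : ι => gaussianReal 0 1)
  map_add' P Q := by
    simpa using integral_add (integrable_eval_gaussianPi P) (integrable_eval_gaussianPi Q)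
  map_smul' a P := by simp [smul_eval, integral_const_mul]

lemma gaussianExpectation_apply (P : MvPolynomial ι ℝ) :
    gaussianExpectation ι P = ∫ z, eval z P ∂(Measure.pi fun _ : ι => gaussianReal 0 1) := rfl

lemma gaussianExpectation_monomial (s : ι →₀ ℕ) (a : ℝ) :
    gaussianExpectation ι (monomial s a) = a * ∏ i, ∫ x, x ^ s i ∂gaussianReal 0 1 := by
  simp_rw [gaussianExpectation_apply, eval_monomial_eq_prod, integral_const_mul]
  rw [integral_fintype_prod_eq_prod (fun i x => x ^ s i)]

@[simp]
lemma gaussianExpectation_C (a : ℝ) : gaussianExpectation ι (C a) = a := by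
  simp [gaussianExpectation_apply]

@[simp]
lemma gaussianExpectation_one : gaussianExpectation ι 1 = 1 := by
  simp [gaussianExpectation_apply]

variable [DecidableEq ι]

lemma gaussianExpectation_X_mul (i : ι) (P : MvPolynomial ι ℝ) :
    gaussianExpectation ι (X i * P) = gaussianExpectation ι (pderiv i P) := by
  induction P using MvPolynomial.induction_on' with
  | monomial s a =>
    rw [X, monomial_mul, pderiv_monomial, gaussianExpectation_monomial,
      gaussianExpectation_monomial, Fintype.prod_eq_mul_prod_compl i,
      Fintype.prod_eq_mul_prod_compl i]
    have hrest : ∏ j ∈ {i}ᶜ, ∫ x, x ^ (Finsupp.single i 1 + s : ι →₀ ℕ) j ∂gaussianReal 0 1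
        = ∏ j ∈ {i}ᶜ, ∫ x, x ^ (s - Finsupp.single i 1 : ι →₀ ℕ) j ∂gaussianReal 0 1 :=
      Finset.prod_congr rfl fun j hj => by simp [Ne.symm (by simpa using hj : j ≠ i)]
    rw [hrest]
    simp [add_comm 1, integral_pow_succ_gaussianReal]
    ring
  | add P Q hP hQ => simp [mul_add, hP, hQ]

lemma gaussianExpectation_X_mul_X_mul (i j : ι) (P : MvPolynomial ι ℝ) :
    gaussianExpectation ι (X i * X j * P)
      = (if i = j then gaussianExpectation ι P else 0)
        + gaussianExpectation ι (pderiv j (pderiv i P)) := by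
  rw [mul_assoc, gaussianExpectation_X_mul, Derivation.leibniz, ← gaussianExpectation_X_mul]
  simp [pderiv_X, Pi.single_apply, eq_comm, apply_ite (gaussianExpectation ι), add_comm]

lemma gaussianExpectation_X (i : ι) : gaussianExpectation ι (X i) = 0 := by
  simpa using gaussianExpectation_X_mul i 1

lemma gaussianExpectation_X_mul_X (i j : ι) :
    gaussianExpectation ι (X i * X j) = if i = j then 1 else 0 := by
  simpa using gaussianExpectation_X_mul_X_mul i j 1

lemma integral_sq_quadratic_gaussianPi (A : Matrix ι ι ℝ) (hA : A.IsSymm) (c : ι → ℝ) (d : ℝ) :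
    ∫ z, (z ⬝ᵥ A *ᵥ z + c ⬝ᵥ z + d) ^ 2 ∂(Measure.pi fun _ : ι => gaussianReal 0 1)
      = 2 * ∑ i, ∑ j, A i j ^ 2 + (A.trace + d) ^ 2 + ∑ i, c i ^ 2 := by
  set W : MvPolynomial ι ℝ := ∑ i, ∑ j, C (A i j) * (X i * X j) + ∑ i, C (c i) * X i + C d
    with hW_def
  have heval : ∀ z, eval z W = z ⬝ᵥ A *ᵥ z + c ⬝ᵥ z + d := fun z => by
    simp [W, dotProduct, Matrix.mulVec, Finset.mul_sum, mul_comm, mul_left_comm]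
  have hW : gaussianExpectation ι W = A.trace + d := by
    simp [W, C_mul', gaussianExpectation_X, gaussianExpectation_X_mul_X, Matrix.trace]
  have hdW : ∀ i, gaussianExpectation ι (pderiv i W) = c i := fun i => by
    simp [W, C_mul', gaussianExpectation_X, Pi.single_apply, Finset.sum_add_distrib]
  have hddW : ∀ i j, pderiv j (pderiv i W) = C (2 * A i j) := fun i j => by
    simp [W, Pi.single_apply, mul_add, Finset.sum_add_distrib, hA.apply i j, two_mul]
  calc _ = gaussianExpectation ι (W * W) := by simp [gaussianExpectation_apply, heval, sq]
    _ = ∑ i, ∑ j, A i j * gaussianExpectation ι (X i * X j * W)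
        + ∑ i, c i * gaussianExpectation ι (X i * W) + d * gaussianExpectation ι W := by
      nth_rewrite 1 [hW_def]
      simp only [add_mul, Finset.sum_mul, mul_assoc, C_mul', smul_mul_assoc, map_add, map_sum,
        map_smul, smul_eq_mul]
    _ = _ := by
      simp only [gaussianExpectation_X_mul_X_mul, gaussianExpectation_X_mul, hW, hdW, hddW,
        gaussianExpectation_C]
      have hdiag : ∑ i, ∑ j, A i j * (if i = j then A.trace + d else 0)
          = A.trace * (A.trace + d) := by
        simp [mul_ite, Matrix.trace, Finset.sum_mul]
      simp only [mul_add, Finset.sum_add_distrib, hdiag, Finset.mul_sum]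
      ring_nf

end GaussianPolynomial

/-- For `f(z) = |Σ_Y^{1/2} z − b|²`, `g(z) = |Σ_X^{1/2} z − a|²`
and `Z` standard normal in `ℝⁿ`,
`E[|f(Z) − g(Z)|²] = 2‖Σ_X − Σ_Y‖²_HS + (tr Σ_X − tr Σ_Y + |a|² − |b|²)²
+ 4|Σ_X^{1/2} a − Σ_Y^{1/2} b|²`. -/
theorem second_moment_norm_difference {n : ℕ}
    (SX SY : Matrix (Fin n) (Fin n) ℝ)
    (hX : SX.PosSemidef) (hY : SY.PosSemidef) (a b : Fin n → ℝ) :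
    (∫ z, ((∑ i, (hY.sqrt.mulVec z i - b i) ^ 2)
          - (∑ i, (hX.sqrt.mulVec z i - a i) ^ 2)) ^ 2
        ∂(Measure.pi fun _ : Fin n => gaussianReal 0 1))
      = 2 * (∑ i, ∑ j, (SX i j - SY i j) ^ 2)
        + (SX.trace - SY.trace + ((∑ i, (a i) ^ 2) - ∑ i, (b i) ^ 2)) ^ 2
        + 4 * ∑ i, (hX.sqrt.mulVec a i - hY.sqrt.mulVec b i) ^ 2 := by
  set c := (2 : ℝ) • (hY.sqrt *ᵥ b - hX.sqrt *ᵥ a)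
  set d := ∑ i, a i ^ 2 - ∑ i, b i ^ 2
  have hsymm : (SX - SY).IsSymm :=
    Matrix.isHermitian_iff_isSymm.1 (hX.isHermitian.sub hY.isHermitian)
  have hpoint : ∀ z : Fin n → ℝ, ((∑ i, (hY.sqrt.mulVec z i - b i) ^ 2)
      - (∑ i, (hX.sqrt.mulVec z i - a i) ^ 2)) ^ 2 = (z ⬝ᵥ (SX - SY) *ᵥ z + c ⬝ᵥ z + d) ^ 2 := by
    intro z
    rw [hX.sum_sq_sqrt_mulVec_sub, hY.sum_sq_sqrt_mulVec_sub, Matrix.sub_mulVec, dotProduct_sub,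
      smul_dotProduct, sub_dotProduct, smul_eq_mul]
    ring
  have hc : ∑ i, c i ^ 2 = 4 * ∑ i, (hX.sqrt.mulVec a i - hY.sqrt.mulVec b i) ^ 2 := by
    rw [Finset.mul_sum]
    exact Finset.sum_congr rfl fun i _ => by simp only [c, Pi.smul_apply, Pi.sub_apply]; ring
  simp_rw [hpoint, integral_sq_quadratic_gaussianPi _ hsymm, hc, Matrix.trace_sub,
    Matrix.sub_apply]
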